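/- arXiv:1103.2140 — 12 statements merged into one kernel-verified Lean document; each statement's English description precedes it below -/
import Mathlib

section
/- Let G : Z ⥤ S be a functor and let z be a minimal object of Z (relative to G). Then z is pseudo-terminal in its fiber category over G(z): for every object w of Z with G(w) = G(z), the set of morphisms w → z lying over the identity of G(z) is either empty or a torsor under the group of automorphisms of z lying over the identity of G(z), acting by post-composition (i.e., this action is free and transitive whenever the set is nonempty). -/
open CategoryTheory

/-- A morphism is an identity morphism (up to the equality of its endpoints). -/
def IsIdentityHom {C : Type*} [Category C] {X Y : C} (f : X ⟶ Y) : Prop :=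
  ∃ h : X = Y, f = eqToHom h

/-- An object `z` is minimal relative to a functor `G : Z ⥤ S` if every pair of
morphisms `i : w' ⟶ w`, `j : w' ⟶ z` with `G i`, `G j` identities admits a unique
completion `k : w ⟶ z` with `i ≫ k = j`. -/
def IsMinimal {Z : Type*} [Category Z] {S : Type*} [Category S]
    (G : Z ⥤ S) (z : Z) : Prop :=
  ∀ {w' w : Z} (i : w' ⟶ w) (j : w' ⟶ z),
    IsIdentityHom (G.map i) → IsIdentityHom (G.map j) →
      ∃! k : w ⟶ z, i ≫ k = j

/-- A minimal object is pseudo-terminal in its fiber category: the set of morphisms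
`w ⟶ z` lying over the identity is empty or a torsor under the automorphisms of `z`
lying over the identity, acting by post-composition. -/
theorem minimal_pseudoTerminal {Z : Type*} [Category Z] {S : Type*} [Category S]
    (G : Z ⥤ S) (z : Z) (hz : IsMinimal G z) (w : Z) (hw : G.obj w = G.obj z)
    (f g : w ⟶ z) (hf : IsIdentityHom (G.map f)) (hg : IsIdentityHom (G.map g)) :
    ∃! σ : z ⟶ z, (IsIdentityHom (G.map σ) ∧ IsIso σ) ∧ f ≫ σ = g := by
  obtain ⟨k, hk, hkuniq⟩ := hz f g hf hg
  obtain ⟨k', hk', _⟩ := hz g f hg hf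
  obtain ⟨kk, hkk, hkkuniq⟩ := hz f f hf hf
  obtain ⟨gg, hgg, hgguniq⟩ := hz g g hg hg
  have hki : k ≫ k' = 𝟙 z := by
    rw [hkkuniq (k ≫ k') (show f ≫ (k ≫ k') = f by rw [← Category.assoc, hk, hk']),
        hkkuniq (𝟙 z) (Category.comp_id f)]
  have hik : k' ≫ k = 𝟙 z := by
    rw [hgguniq (k' ≫ k) (show g ≫ (k' ≫ k) = g by rw [← Category.assoc, hk', hk]),
        hgguniq (𝟙 z) (Category.comp_id g)]
  refine ⟨k, ⟨⟨?_, ⟨k', hki, hik⟩⟩, hk⟩, fun σ hσ => hkuniq σ hσ.2⟩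
  obtain ⟨h1, hf1⟩ := hf
  obtain ⟨h2, hg2⟩ := hg
  refine ⟨rfl, ?_⟩
  have := congrArg G.map hk
  rw [G.map_comp, hf1, hg2, eqToHom_comp_iff] at this
  simpa using this
end

section
/- Let G : Z ⥤ S be a functor, let z and w be minimal objects of Z (relative to G), and let f : z → w be a morphism of Z with G(f) an identity morphism. Then f is an isomorphism. -/
open CategoryTheory

/-- A morphism between minimal objects lying over an identity is an isomorphism. -/
theorem minimal_to_minimal_isIso {Z : Type*} [Category Z] {S : Type*} [Category S]
    (G : Z ⥤ S) (z w : Z) (hz : IsMinimal G z) (hw : IsMinimal G w)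
    (f : z ⟶ w) (hf : IsIdentityHom (G.map f)) : IsIso f := by
  have hid : IsIdentityHom (G.map (𝟙 z)) := ⟨rfl, by simp⟩
  obtain ⟨g, hg, -⟩ := hz f (𝟙 z) hf hid
  obtain ⟨k, -, huniq⟩ := hw f f hf hf
  have h1 : g ≫ f = 𝟙 w := by
    have e1 := huniq (g ≫ f) (by simp only [← Category.assoc, hg, Category.id_comp])
    have e2 := huniq (𝟙 w) (by simp)
    rw [e1, e2]
  exact ⟨g, hg, h1⟩
end

section
/- Let F : Z ⥤ L be a groupoid fibration and U : L ⥤ S a fibered category, and suppose condition (B2) holds. Then for any morphisms i : w' → w and j : w' → z in Z such that U(F(i)) is an identity morphism and z is minimal, there exists a unique morphism k : w → z in Z with k ∘ i = j. -/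
open CategoryTheory

/-- A morphism `f : c' ⟶ c` is cartesian relative to `T : C ⥤ D` if every
`g : c'' ⟶ c` and `u : T c'' ⟶ T c'` with `u ≫ T f = T g` lift uniquely. -/
def IsCartesianHom {C : Type*} [Category C] {D : Type*} [Category D]
    (T : C ⥤ D) {c' c : C} (f : c' ⟶ c) : Prop :=
  ∀ {c'' : C} (g : c'' ⟶ c) (u : T.obj c'' ⟶ T.obj c'),
    u ≫ T.map f = T.map g → ∃! h : c'' ⟶ c', T.map h = u ∧ h ≫ f = g

/-- `T : C ⥤ D` is a fibered category if every morphism `φ : d ⟶ T c` has a cartesian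
lift with codomain `c` lying over it. -/
def IsFiberedCat {C : Type*} [Category C] {D : Type*} [Category D] (T : C ⥤ D) : Prop :=
  ∀ (c : C) (d : D) (φ : d ⟶ T.obj c),
    ∃ (c' : C) (f : c' ⟶ c) (e : T.obj c' = d),
      IsCartesianHom T f ∧ T.map f = eqToHom e ≫ φ

/-- `T` is a groupoid fibration if it is a fibered category and every morphism is
cartesian relative to `T`. -/
def IsGroupoidFibration {C : Type*} [Category C] {D : Type*} [Category D]
    (T : C ⥤ D) : Prop :=
  IsFiberedCat T ∧ ∀ {c' c : C} (f : c' ⟶ c), IsCartesianHom T f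

/-- Condition (B2): for `i : w ⟶ z` with `z` minimal, `F i` is cartesian relative
to `U` iff `w` is minimal. -/
def CondB2 {Z : Type*} [Category Z] {L : Type*} [Category L] {S : Type*} [Category S]
    (F : Z ⥤ L) (U : L ⥤ S) : Prop :=
  ∀ {w z : Z} (i : w ⟶ z), IsMinimal (F ⋙ U) z →
    (IsCartesianHom U (F.map i) ↔ IsMinimal (F ⋙ U) w)

/-- For a groupoid fibration `F` over a fibered category `U` satisfying (B2), a
minimal object `z` has the stronger lifting property: any `i : w' ⟶ w`, `j : w' ⟶ z`
with `U (F i)` an identity has a unique completion `k : w ⟶ z` with `i ≫ k = j`. -/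
theorem minimal_strong_lifting {Z : Type*} [Category Z] {L : Type*} [Category L]
    {S : Type*} [Category S] (F : Z ⥤ L) (U : L ⥤ S)
    (hF : IsGroupoidFibration F) (hU : IsFiberedCat U) (hB2 : CondB2 F U)
    {w' w z : Z} (i : w' ⟶ w) (j : w' ⟶ z)
    (hi : IsIdentityHom ((F ⋙ U).map i)) (hz : IsMinimal (F ⋙ U) z) :
    ∃! k : w ⟶ z, i ≫ k = j := by
  obtain ⟨h₀, hi0⟩ := hi
  obtain ⟨l, f, e, hf_cart, hf_eq⟩ := hU (F.obj z) ((F ⋙ U).obj w') ((F ⋙ U).map j)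
  obtain ⟨z', g, e₂, -, hg_eq⟩ := hF.1 z l f
  subst e₂
  simp only [eqToHom_refl, Category.id_comp] at hg_eq
  rw [← hg_eq] at hf_cart hf_eq
  -- hf_cart : IsCartesianHom U (F.map g)
  -- hf_eq : U.map (F.map g) = eqToHom e ≫ (F ⋙ U).map j
  have factor : ∀ {x : Z} (m : x ⟶ z) (p : U.obj (F.obj x) = U.obj (F.obj w')),
      U.map (F.map m) = eqToHom p ≫ U.map (F.map j) →
      ∃! m' : x ⟶ z', m' ≫ g = m ∧ IsIdentityHom ((F ⋙ U).map m') := by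
    intro x m p hm
    have e' : U.obj (F.obj x) = U.obj (F.obj z') := p.trans e.symm
    have hcomp : eqToHom e' ≫ U.map (F.map g) = U.map (F.map m) := by
      rw [hf_eq, hm]
      simp only [Functor.comp_map, eqToHom_trans_assoc, eqToHom_trans]
    obtain ⟨h, ⟨hh1, hh2⟩, hhu⟩ := hf_cart (F.map m) (eqToHom e') hcomp
    obtain ⟨m', ⟨hm1, hm2⟩, hmu⟩ := hF.2 g m h (by rw [hh2])
    refine ⟨m', ⟨hm2, ⟨e', by show U.map (F.map m') = _; rw [hm1, hh1]⟩⟩, ?_⟩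
    rintro m'' ⟨hc, q, hq⟩
    have hq' : U.map (F.map m'') = eqToHom e' := hq
    have hF'' : F.map m'' = h := by
      refine hhu (F.map m'') ⟨hq', ?_⟩
      rw [← F.map_comp, hc]
    exact hmu m'' ⟨hF'', hc⟩
  obtain ⟨j', ⟨hj'g, hj'id⟩, hj'u⟩ := factor j rfl (by simp)
  have hz' : IsMinimal (F ⋙ U) z' := (hB2 g hz).mp hf_cart
  obtain ⟨k', hk'1, hk'2⟩ := hz' i j' ⟨h₀, hi0⟩ hj'id
  refine ⟨k' ≫ g, show i ≫ k' ≫ g = j by rw [← Category.assoc, hk'1, hj'g], ?_⟩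
  intro k₁ hk₁
  have h1 : (F ⋙ U).map i ≫ (F ⋙ U).map k₁ = (F ⋙ U).map j := by
    rw [← Functor.map_comp, hk₁]
  rw [hi0] at h1
  simp only [Functor.comp_map] at h1
  have hUFk₁ : U.map (F.map k₁) = eqToHom h₀.symm ≫ U.map (F.map j) := by
    rw [← h1]
    simp only [Functor.comp_map, eqToHom_trans_assoc, eqToHom_refl, Category.id_comp]
  obtain ⟨k₁', ⟨hk₁'g, q₁, hq₁⟩, -⟩ := factor k₁ h₀.symm hUFk₁
  have hik₁' : i ≫ k₁' = j' := by
    refine hj'u (i ≫ k₁') ⟨by rw [Category.assoc, hk₁'g, hk₁], h₀.trans q₁, ?_⟩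
    rw [Functor.map_comp, hi0, hq₁, eqToHom_trans]
  have : k₁' = k' := hk'2 k₁' hik₁'
  rw [← hk₁'g, this]
end

section
/- Let F : Z ⥤ L be a groupoid fibration and U : L ⥤ S a fibered category, and suppose condition (B2) holds. Then for any morphisms i : z' → w and j : z → w in Z such that U(F(i)) = U(F(j)) (in particular U(F(z')) = U(F(z))) and such that both w and z are minimal, there exists a unique morphism k : z' → z in Z such that U(F(k)) is an identity morphism and j ∘ k = i. -/
open CategoryTheory

/-- For a groupoid fibration `F` over a fibered category `U` satisfying (B2), any two
morphisms `i : z' ⟶ w`, `j : z ⟶ w` with `U (F i) = U (F j)` (modulo the induced equality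
of objects) and with `w`, `z` minimal are related by a unique morphism `k : z' ⟶ z`
lying over an identity with `k ≫ j = i`. -/
theorem minimal_comparison {Z : Type*} [Category Z] {L : Type*} [Category L]
    {S : Type*} [Category S] (F : Z ⥤ L) (U : L ⥤ S)
    (hF : IsGroupoidFibration F) (hU : IsFiberedCat U) (hB2 : CondB2 F U)
    {z' z w : Z} (i : z' ⟶ w) (j : z ⟶ w)
    (e : (F ⋙ U).obj z' = (F ⋙ U).obj z)
    (hij : (F ⋙ U).map i = eqToHom e ≫ (F ⋙ U).map j)
    (hw : IsMinimal (F ⋙ U) w) (hz : IsMinimal (F ⋙ U) z) :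
    ∃! k : z' ⟶ z, IsIdentityHom ((F ⋙ U).map k) ∧ k ≫ j = i := by
  have hjcart : IsCartesianHom U (F.map j) := (hB2 j hw).mpr hz
  obtain ⟨h, ⟨hU1, hU2⟩, huniq⟩ :=
    hjcart (F.map i) (eqToHom e) hij.symm
  obtain ⟨k, ⟨hk1, hk2⟩, hkuniq⟩ := hF.2 j i h hU2
  refine ⟨k, ⟨⟨e, by simpa [hk1] using hU1⟩, hk2⟩, ?_⟩
  rintro k' ⟨⟨e', hke'⟩, hk'j⟩
  apply hkuniq
  refine ⟨?_, hk'j⟩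
  apply huniq
  refine ⟨?_, ?_⟩
  · show U.map (F.map k') = eqToHom e
    exact hke'
  · rw [← F.map_comp, hk'j]
end

section
/- Let F : Z ⥤ L be a groupoid fibration and U : L ⥤ S a fibered category, and suppose condition (B2) holds. Let Z^m denote the full subcategory of Z on the minimal objects. Then the restriction of the composite functor U ∘ F to Z^m is a groupoid fibration over S: it is a fibered category and every morphism of Z^m is cartesian relative to this restricted functor. -/
/-!
A morphism of `Z` that is cartesian for `F` and whose image is cartesian for `U` is cartesian
for `F ⋙ U`, and cartesianness passes to full subcategories. Since every morphism is
`F`-cartesian, (B2) makes every morphism between minimal objects `F ⋙ U`-cartesian. For lifts,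
lift `φ` first along `U` to a `U`-cartesian morphism, then along `F`; (B2) shows that the
domain of the resulting morphism is again minimal.
-/

open CategoryTheory

section Cartesian

variable {Z : Type*} [Category Z] {L : Type*} [Category L] {S : Type*} [Category S]

lemma isCartesianHom_functor_comp (F : Z ⥤ L) (U : L ⥤ S) {w z : Z} (f : w ⟶ z)
    (hUf : IsCartesianHom U (F.map f)) (hFf : IsCartesianHom F f) :
    IsCartesianHom (F ⋙ U) f := by
  intro w'' g u hu
  obtain ⟨v, ⟨hvu, hv⟩, hv_uniq⟩ := hUf (F.map g) u (by simpa using hu)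
  obtain ⟨h, ⟨hhv, hh⟩, hh_uniq⟩ := hFf g v hv
  refine ⟨h, ⟨by simp [hhv, hvu], hh⟩, fun h' ⟨hu', hh'⟩ => hh_uniq h' ⟨?_, hh'⟩⟩
  exact hv_uniq (F.map h') ⟨hu', by rw [← F.map_comp, hh']⟩

lemma isCartesianHom_ι_comp {P : ObjectProperty Z} (G : Z ⥤ S) {x y : P.FullSubcategory}
    (f : x ⟶ y) (hf : IsCartesianHom G f.hom) : IsCartesianHom (P.ι ⋙ G) f := by
  intro c'' g u hu
  obtain ⟨k, ⟨hk, hkf⟩, hk_uniq⟩ := hf g.hom u (by simpa using hu)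
  refine ⟨ObjectProperty.homMk k, ⟨by simpa using hk, by ext; simpa using hkf⟩, ?_⟩
  rintro h' ⟨hu', hh'⟩
  ext
  exact hk_uniq h'.hom ⟨by simpa using hu', by rw [← hh']; rfl⟩

lemma isCartesianHom_of_isMinimal (F : Z ⥤ L) (U : L ⥤ S)
    (hF : ∀ {w z : Z} (f : w ⟶ z), IsCartesianHom F f) (hB2 : CondB2 F U)
    {x y : ObjectProperty.FullSubcategory (IsMinimal (F ⋙ U))} (f : x ⟶ y) :
    IsCartesianHom (ObjectProperty.ι _ ⋙ F ⋙ U) f :=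
  isCartesianHom_ι_comp _ f <|
    isCartesianHom_functor_comp F U f.hom ((hB2 f.hom y.property).mpr x.property) (hF f.hom)

lemma exists_isMinimal_lift (F : Z ⥤ L) (U : L ⥤ S) (hF : IsFiberedCat F)
    (hU : IsFiberedCat U) (hB2 : CondB2 F U) {c : Z} (hc : IsMinimal (F ⋙ U) c) {d : S}
    (φ : d ⟶ U.obj (F.obj c)) :
    ∃ (w : Z) (f : w ⟶ c) (e : U.obj (F.obj w) = d),
      IsMinimal (F ⋙ U) w ∧ U.map (F.map f) = eqToHom e ≫ φ := by
  obtain ⟨l, m, rfl, hm, hmφ⟩ := hU (F.obj c) _ φ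
  obtain ⟨w, f, rfl, -, hfm⟩ := hF c _ m
  rw [eqToHom_refl, Category.id_comp] at hmφ hfm
  subst hfm
  exact ⟨w, f, rfl, (hB2 f hc).mp hm, by rw [hmφ, eqToHom_refl, Category.id_comp]⟩

end Cartesian

/-- For a groupoid fibration `F : Z ⥤ L` over a fibered category `U : L ⥤ S`
satisfying (B2), the restriction of `U ∘ F` to the full subcategory of minimal
objects of `Z` is a groupoid fibration over `S`. -/
theorem minimal_subcategory_groupoidFibration {Z : Type*} [Category Z]
    {L : Type*} [Category L] {S : Type*} [Category S] (F : Z ⥤ L) (U : L ⥤ S)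
    (hF : IsGroupoidFibration F) (hU : IsFiberedCat U) (hB2 : CondB2 F U) :
    IsGroupoidFibration
      (ObjectProperty.ι (fun z : Z => IsMinimal (F ⋙ U) z) ⋙ F ⋙ U) := by
  refine ⟨fun ⟨c, hc⟩ d φ => ?_, isCartesianHom_of_isMinimal F U hF.2 hB2⟩
  obtain ⟨w, f, e, hw, hfφ⟩ := exists_isMinimal_lift F U hF.1 hU hB2 hc φ
  exact ⟨⟨w, hw⟩, ObjectProperty.homMk f, e,
    isCartesianHom_of_isMinimal F U hF.2 hB2 _, hfφ⟩
end

section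
/- Let h : Q → P be an injective, integral homomorphism of sharp, cancellative additive commutative monoids and let f : Q → R be any homomorphism to a sharp, cancellative additive commutative monoid R. Then the pushout P ⊕_Q R of h and f in the category of additive commutative monoids is the quotient of the direct sum P ⊕ R by the monoid congruence ∼, where (p, r) ∼ (p', r') if and only if there exist q, q' ∈ Q with p + h(q) = p' + h(q') and r + f(q') = r' + f(q). In particular, the canonical map P ⊕ R → P ⊕_Q R is surjective and identifies (p, r) with (p', r') exactly when this condition holds. -/
/-- A (additive commutative) monoid is sharp if `x + y = 0` implies `x = 0`. -/
def Sharp (M : Type*) [AddCommMonoid M] : Prop :=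
  ∀ x y : M, x + y = 0 → x = 0

/-- A monoid is cancellative if `a + c = b + c` implies `a = b`. -/
def Cancellative (M : Type*) [AddCommMonoid M] : Prop :=
  ∀ a b c : M, a + c = b + c → a = b

/-- A monoid homomorphism `h : Q →+ P` is integral if whenever
`p1 + h q1 = p2 + h q2` there are `q3, q4, p` with `p1 = p + h q4`,
`p2 = p + h q3` and `q1 + q4 = q2 + q3`. -/
def IntegralHom {Q P : Type*} [AddCommMonoid Q] [AddCommMonoid P] (h : Q →+ P) : Prop :=
  ∀ (q1 q2 : Q) (p1 p2 : P), p1 + h q1 = p2 + h q2 →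
    ∃ (q3 q4 : Q) (p : P), p1 = p + h q4 ∧ p2 = p + h q3 ∧ q1 + q4 = q2 + q3

/-- An element `p` of `P` is `Q`-primitive (relative to `h : Q →+ P`) if whenever
`p = p' + h q` one has `q = 0`. -/
def QPrimitive {Q P : Type*} [AddCommMonoid Q] [AddCommMonoid P] (h : Q →+ P) (p : P) : Prop :=
  ∀ (p' : P) (q : Q), p = p' + h q → q = 0

/-- Membership in the ideal `I_Q = {h q + p : q ∈ Q, q ≠ 0, p ∈ P}`. -/
def MemIQ {Q P : Type*} [AddCommMonoid Q] [AddCommMonoid P] (h : Q →+ P) (p : P) : Prop :=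
  ∃ q : Q, q ≠ 0 ∧ ∃ p' : P, p = h q + p'

/-- `h` is without nilpotents if `n • p ∈ I_Q` for some `n ≥ 1` implies `p ∈ I_Q`. -/
def WithoutNilpotents {Q P : Type*} [AddCommMonoid Q] [AddCommMonoid P] (h : Q →+ P) : Prop :=
  ∀ (p : P) (n : ℕ), 1 ≤ n → MemIQ h (n • p) → MemIQ h p

/-- The congruence on `P` identifying `p ∼ p'` iff `p + h q = p' + h q'` for some
`q, q' ∈ Q`; the quotient monoid `P/Q` is its quotient. -/
def quotCon {Q P : Type*} [AddCommMonoid Q] [AddCommMonoid P] (h : Q →+ P) : AddCon P where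
  r p p' := ∃ q q' : Q, p + h q = p' + h q'
  iseqv := by
    constructor
    · exact fun p => ⟨0, 0, rfl⟩
    · rintro p p' ⟨q, q', e⟩; exact ⟨q', q, e.symm⟩
    · rintro p p' p'' ⟨q, q', e1⟩ ⟨s, s', e2⟩
      refine ⟨q + s, s' + q', ?_⟩
      calc p + h (q + s) = (p + h q) + h s := by rw [map_add, add_assoc]
        _ = (p' + h q') + h s := by rw [e1]
        _ = (p' + h s) + h q' := add_right_comm _ _ _
        _ = (p'' + h s') + h q' := by rw [e2]
        _ = p'' + h (s' + q') := by rw [map_add, add_assoc]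
  add' := by
    rintro a b c d ⟨q1, q1', e1⟩ ⟨q2, q2', e2⟩
    refine ⟨q1 + q2, q1' + q2', ?_⟩
    calc (a + c) + h (q1 + q2) = (a + h q1) + (c + h q2) := by
          rw [map_add]; exact add_add_add_comm _ _ _ _
      _ = (b + h q1') + (d + h q2') := by rw [e1, e2]
      _ = (b + d) + h (q1' + q2') := by rw [map_add]; exact (add_add_add_comm _ _ _ _).symm

/-- A monoid is saturated if it is cancellative and whenever `n • a = n • b + p`
for some `n ≥ 1` there is `p'` with `a = b + p'`. -/
def Saturated (M : Type*) [AddCommMonoid M] : Prop :=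
  Cancellative M ∧ ∀ (a b p : M) (n : ℕ), 1 ≤ n → n • a = n • b + p → ∃ p' : M, a = b + p'

/-- The congruence on `P × R` generated by `(h q, 0) ∼ (0, f q)`, whose quotient is
the pushout `P ⊕_Q R` in the category of additive commutative monoids. -/
def pushCon {Q P R : Type*} [AddCommMonoid Q] [AddCommMonoid P] [AddCommMonoid R]
    (h : Q →+ P) (f : Q →+ R) : AddCon (P × R) :=
  addConGen (fun a b => ∃ q : Q, a = (h q, 0) ∧ b = ((0 : P), f q))

/-!
Every generating relation `(h q, 0) ∼ (0, f q)` of the pushout congruence satisfies the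
explicit condition, and the explicit relation is itself a congruence, so the pushout
congruence is contained in it. Conversely, given `p + h q = p' + h q'` and
`r + f q' = r' + f q`, integrality of `h` writes `p = p₀ + h q₄`, `p' = p₀ + h q₃` with
`q + q₄ = q' + q₃`; moving `h q₄` and `h q₃` across the pushout relates `(p, r)` and
`(p', r')` to `(p₀, r + f q₄)` and `(p₀, r' + f q₃)`, and these agree after cancelling
`f q'` in `R`.
-/

section

variable {Q P R : Type*} [AddCommMonoid Q] [AddCommMonoid P] [AddCommMonoid R]
  (h : Q →+ P) (f : Q →+ R)

def explicitPushCon : AddCon (P × R) where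
  r a b := ∃ q q' : Q, a.1 + h q = b.1 + h q' ∧ a.2 + f q' = b.2 + f q
  iseqv := by
    constructor
    · exact fun a => ⟨0, 0, rfl, rfl⟩
    · rintro a b ⟨q, q', e1, e2⟩
      exact ⟨q', q, e1.symm, e2.symm⟩
    · rintro a b c ⟨q1, q1', e1, e2⟩ ⟨q2, q2', e3, e4⟩
      refine ⟨q1 + q2, q2' + q1', ?_, ?_⟩
      · calc a.1 + h (q1 + q2) = (a.1 + h q1) + h q2 := by rw [map_add, add_assoc]
          _ = (b.1 + h q2) + h q1' := by rw [e1, add_right_comm]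
          _ = c.1 + h (q2' + q1') := by rw [e3, map_add, add_assoc]
      · calc a.2 + f (q2' + q1') = (a.2 + f q1') + f q2' := by
              rw [map_add, add_assoc, add_comm (f q2')]
          _ = (b.2 + f q2') + f q1 := by rw [e2, add_right_comm]
          _ = c.2 + f (q1 + q2) := by
              rw [e4, add_right_comm, map_add, add_assoc, add_comm (f q1)]
  add' := by
    rintro a b c d ⟨q1, q1', e1, e2⟩ ⟨q2, q2', e3, e4⟩
    refine ⟨q1 + q2, q1' + q2', ?_, ?_⟩
    · change (a.1 + c.1) + h (q1 + q2) = (b.1 + d.1) + h (q1' + q2')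
      rw [map_add, map_add, add_add_add_comm a.1 c.1, e1, e3, add_add_add_comm]
    · change (a.2 + c.2) + f (q1' + q2') = (b.2 + d.2) + f (q1 + q2)
      rw [map_add, map_add, add_add_add_comm a.2 c.2, e2, e4, add_add_add_comm]

theorem pushCon_le_explicitPushCon : pushCon h f ≤ explicitPushCon h f :=
  AddCon.addConGen_le.mpr <| by
    rintro _ _ ⟨q, rfl, rfl⟩
    exact ⟨0, q, by simp, by simp⟩

theorem pushCon_add_map_fst (p : P) (r : R) (q : Q) : pushCon h f (p + h q, r) (p, r + f q) := by
  have hgen : pushCon h f (h q, 0) (0, f q) := AddConGen.Rel.of _ _ ⟨q, rfl, rfl⟩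
  simpa using (pushCon h f).add ((pushCon h f).refl (p, r)) hgen

theorem explicitPushCon_le_pushCon (hRcanc : Cancellative R) (hint : IntegralHom h) :
    explicitPushCon h f ≤ pushCon h f := by
  rintro ⟨p, r⟩ ⟨p', r'⟩ ⟨q, q', hp, hr⟩
  obtain ⟨q₃, q₄, p₀, rfl, rfl, hq⟩ := hint q q' p p' hp
  have hr₀ : r + f q₄ = r' + f q₃ := by
    apply hRcanc _ _ (f q')
    calc r + f q₄ + f q' = r' + f (q + q₄) := by
          rw [add_right_comm, hr, map_add, add_assoc]
      _ = r' + f q₃ + f q' := by rw [hq, map_add, add_comm (f q'), add_assoc]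
  have hleft := pushCon_add_map_fst h f p₀ r q₄
  have hright := pushCon_add_map_fst h f p₀ r' q₃
  rw [hr₀] at hleft
  exact hleft.trans hright.symm

theorem pushCon_eq_explicitPushCon (hRcanc : Cancellative R) (hint : IntegralHom h) :
    pushCon h f = explicitPushCon h f :=
  le_antisymm (pushCon_le_explicitPushCon h f) (explicitPushCon_le_pushCon h f hRcanc hint)

end

theorem pushout_con_explicit_general {Q P R : Type*} [AddCommMonoid Q] [AddCommMonoid P]
    [AddCommMonoid R]
    (hRcanc : Cancellative R)
    (h : Q →+ P) (hint : IntegralHom h)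
    (f : Q →+ R) :
    (∀ a b : P × R, pushCon h f a b ↔
      ∃ q q' : Q, a.1 + h q = b.1 + h q' ∧ a.2 + f q' = b.2 + f q) ∧
    Function.Surjective ((pushCon h f).mk' : P × R →+ (pushCon h f).Quotient) := by
  refine ⟨fun a b => ?_, AddCon.mk'_surjective⟩
  rw [pushCon_eq_explicitPushCon h f hRcanc hint]
  rfl

/-- For an injective integral map `h : Q →+ P` of sharp cancellative monoids and any
`f : Q →+ R` with `R` sharp cancellative, the pushout congruence on `P ⊕ R` is exactly:
`(p, r) ∼ (p', r')` iff there are `q, q' ∈ Q` with `p + h q = p' + h q'` and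
`r + f q' = r' + f q`.  (In particular the canonical map `P ⊕ R → P ⊕_Q R` to the
quotient by this congruence is surjective and identifies `(p, r)` with `(p', r')`
exactly when this condition holds.) -/
theorem pushout_con_explicit {Q P R : Type*} [AddCommMonoid Q] [AddCommMonoid P]
    [AddCommMonoid R]
    (hQsharp : Sharp Q) (hQcanc : Cancellative Q)
    (hPsharp : Sharp P) (hPcanc : Cancellative P)
    (hRsharp : Sharp R) (hRcanc : Cancellative R)
    (h : Q →+ P) (hinj : Function.Injective h) (hint : IntegralHom h)
    (f : Q →+ R) :
    (∀ a b : P × R, pushCon h f a b ↔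
      ∃ q q' : Q, a.1 + h q = b.1 + h q' ∧ a.2 + f q' = b.2 + f q) ∧
    Function.Surjective ((pushCon h f).mk' : P × R →+ (pushCon h f).Quotient) :=
  pushout_con_explicit_general hRcanc h hint f
end

section
/- Let h : Q → P be an injective, integral homomorphism of fine, sharp additive commutative monoids, without nilpotents, and suppose P is saturated. Then the quotient group P^gp / Q^gp is torsion free; elementwise: for all p1, p2 ∈ P and all integers n ≥ 1, if there exist q1, q2 ∈ Q with n•p1 + h(q1) = n•p2 + h(q2), then there exist q1', q2' ∈ Q with p1 + h(q1') = p2 + h(q2'). -/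
/-
Integrality and sharpness of `P` make `h` exact: `n • p₁ + h q₁ = n • p₂ + h q₂` can be rewritten as
`n • p₁ = p + h q₄`, `n • p₂ = p + h q₃`. Saturation applied to `p₁ + (n - 1) • p₂`, whose `n`-fold
multiple is `n • p` plus an element of `h(Q)`, gives `p₁ + (n - 1) • p₂ = p + r` with `n • r ∈ h(Q)`.
Since `h` has no nilpotents, `n • r ∈ h(Q)` forces `r ∈ h(Q)`: by Noetherian induction on `r` for
divisibility (well-founded by Dickson's lemma as `P` is finitely generated), either `r = 0`, or
`n • r ∈ I_Q`, so `r = h q + r'` with `q ≠ 0`, exactness gives `n • r' ∈ h(Q)`, and `r'` is strictly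
smaller than `r`. Cancelling `p + (n - 1) • p₂` then gives `p₁ + h q₃ = p₂ + h w`.
-/

section Monoid

variable {M : Type*} [AddCommMonoid M]

theorem wellQuasiOrdered_addDvd_of_fg (hfg : AddMonoid.FG M) :
    WellQuasiOrdered fun a b : M => ∃ c, b = a + c := by
  obtain ⟨n, f, hf⟩ := AddSubmonoid.fg_iff_exists_fin_addMonoidHom.1 hfg.fg_top
  rw [AddMonoidHom.mrange_eq_top] at hf
  refine wellQuasiOrdered_le.of_surjective ⟨f, fun {x y} hxy => ⟨f (y - x), ?_⟩⟩ hf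
  rw [← map_add, add_tsub_cancel_of_le hxy]

theorem wellFounded_strictAddDvd_of_fg (hfg : AddMonoid.FG M) :
    WellFounded fun a b : M => (∃ c, b = a + c) ∧ ¬∃ c, a = b + c :=
  have : IsPreorder M fun a b : M => ∃ c, b = a + c :=
    { refl a := ⟨0, (add_zero a).symm⟩
      trans _ _ _ := fun ⟨c, hc⟩ ⟨d, hd⟩ => ⟨c + d, by rw [hd, hc, add_assoc]⟩ }
  (wellQuasiOrdered_addDvd_of_fg hfg).wellFounded

theorem Sharp.eq_zero_of_nsmul_eq_zero (hM : Sharp M) {n : ℕ} (hn : 1 ≤ n) {a : M}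
    (h : n • a = 0) : a = 0 := by
  obtain ⟨m, rfl⟩ := Nat.exists_eq_add_of_le' hn
  exact hM a (m • a) (by rwa [succ_nsmul'] at h)

theorem Saturated.exists_eq_add_nsmul_eq (hM : Saturated M) {n : ℕ} (hn : 1 ≤ n) {a b c : M}
    (h : n • a = n • b + c) : ∃ r, a = b + r ∧ n • r = c := by
  obtain ⟨r, rfl⟩ := hM.2 a b c n hn h
  refine ⟨r, rfl, hM.1 _ _ (n • b) ?_⟩
  rw [add_comm, ← smul_add, h, add_comm]

end Monoid

section Integral

variable {Q P : Type*} [AddCommMonoid Q] [AddCommMonoid P] {h : Q →+ P}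

theorem IntegralHom.mem_range_of_add_eq (hint : IntegralHom h) (hP : Sharp P) {p : P} {a b : Q}
    (hp : p + h b = h a) : p ∈ Set.range h := by
  obtain ⟨q₃, q₄, p₀, rfl, hp₀, -⟩ := hint b a p 0 (by rw [hp, zero_add])
  rw [hP p₀ (h q₃) hp₀.symm, zero_add]
  exact ⟨q₄, rfl⟩

theorem mem_range_of_nsmul_mem_range (hPsharp : Sharp P) (hPcanc : Cancellative P)
    (hPfg : AddMonoid.FG P) (hinj : Function.Injective h) (hint : IntegralHom h)
    (hnil : WithoutNilpotents h) {n : ℕ} (hn : 1 ≤ n) {r : P} (hr : n • r ∈ Set.range h) :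
    r ∈ Set.range h := by
  induction r using (wellFounded_strictAddDvd_of_fg hPfg).induction with
  | _ r ih =>
    obtain ⟨s, hs⟩ := hr
    by_cases hs0 : s = 0
    · rw [hs0, map_zero] at hs
      exact ⟨0, by rw [map_zero, hPsharp.eq_zero_of_nsmul_eq_zero hn hs.symm]⟩
    obtain ⟨q, hq, r', rfl⟩ := hnil r n hn ⟨s, hs0, 0, by rw [← hs, add_zero]⟩
    have hr' : n • r' ∈ Set.range h := hint.mem_range_of_add_eq hPsharp (a := s) (b := n • q)
      (by rw [map_nsmul, hs, nsmul_add, add_comm])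
    have hlt : (∃ c, h q + r' = r' + c) ∧ ¬∃ c, r' = h q + r' + c := by
      refine ⟨⟨h q, add_comm _ _⟩, fun ⟨c, hc⟩ => hq (hinj ?_)⟩
      have hzero : h q + c = 0 := hPcanc _ _ r' (by rw [zero_add, add_right_comm, ← hc])
      rw [hPsharp _ _ hzero, map_zero]
    obtain ⟨w, hw⟩ := ih r' hlt hr'
    exact ⟨q + w, by rw [map_add, hw]⟩

end Integral

theorem torsionFree_of_no_nilpotents_general {Q P : Type*} [AddCommMonoid Q] [AddCommMonoid P]
    (hPsharp : Sharp P) (hPcanc : Cancellative P) (hPfg : AddMonoid.FG P)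
    (h : Q →+ P) (hinj : Function.Injective h) (hint : IntegralHom h)
    (hnil : WithoutNilpotents h) (hsat : Saturated P) :
    ∀ (p1 p2 : P) (n : ℕ), 1 ≤ n →
      (∃ q1 q2 : Q, n • p1 + h q1 = n • p2 + h q2) →
      ∃ q1' q2' : Q, p1 + h q1' = p2 + h q2' := by
  rintro p1 p2 n hn ⟨q1, q2, heq⟩
  obtain ⟨q3, q4, p, e1, e2, -⟩ := hint q1 q2 (n • p1) (n • p2) heq
  obtain ⟨m, rfl⟩ := Nat.exists_eq_add_of_le' hn
  have hmul : (m + 1) • (p1 + m • p2) = (m + 1) • p + h (q4 + m • q3) := by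
    rw [nsmul_add, smul_comm _ m p2, e1, e2, map_add, map_nsmul, nsmul_add, succ_nsmul]
    abel
  obtain ⟨r, hr, hnr⟩ := hsat.exists_eq_add_nsmul_eq hn hmul
  obtain ⟨w, hw⟩ := mem_range_of_nsmul_mem_range hPsharp hPcanc hPfg hinj hint hnil hn ⟨_, hnr.symm⟩
  refine ⟨q3, w, hPcanc _ _ (p + m • p2) ?_⟩
  calc p1 + h q3 + (p + m • p2) = p1 + m • p2 + (p + h q3) := by abel
    _ = p + h w + (m + 1) • p2 := by rw [hr, hw, e2]
    _ = p2 + h w + (p + m • p2) := by rw [succ_nsmul]; abel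

/-- For an injective, integral homomorphism `h : Q →+ P` of fine, sharp monoids,
without nilpotents, with `P` saturated, the quotient group `P^gp / Q^gp` is torsion
free; elementwise: if `n • p1` and `n • p2` agree modulo `Q` for some `n ≥ 1`, then
`p1` and `p2` agree modulo `Q`. -/
theorem torsionFree_of_no_nilpotents {Q P : Type*} [AddCommMonoid Q] [AddCommMonoid P]
    (hQsharp : Sharp Q) (hQcanc : Cancellative Q) (hQfg : AddMonoid.FG Q)
    (hPsharp : Sharp P) (hPcanc : Cancellative P) (hPfg : AddMonoid.FG P)
    (h : Q →+ P) (hinj : Function.Injective h) (hint : IntegralHom h)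
    (hnil : WithoutNilpotents h) (hsat : Saturated P) :
    ∀ (p1 p2 : P) (n : ℕ), 1 ≤ n →
      (∃ q1 q2 : Q, n • p1 + h q1 = n • p2 + h q2) →
      ∃ q1' q2' : Q, p1 + h q1' = p2 + h q2' :=
  torsionFree_of_no_nilpotents_general hPsharp hPcanc hPfg h hinj hint hnil hsat
end

section
/- Let h : Q → P be an injective, integral homomorphism of fine, sharp additive commutative monoids, without nilpotents, with P saturated, and suppose the quotient group P^gp / Q^gp is infinite cyclic (isomorphic to ℤ). Then the quotient monoid P/Q is saturated; in fact P/Q is isomorphic as a monoid to the trivial monoid 0, to ℕ, or to ℤ. -/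
theorem Cancellative.of_injective {M N : Type*} [AddCommMonoid M] [AddCommMonoid N]
    (hN : Cancellative N) (f : M →+ N) (hf : Function.Injective f) : Cancellative M :=
  fun a b c e => hf <| hN _ _ (f c) <| by rw [← map_add, ← map_add, e]

theorem AddCon.lift_injective_of_ker_le {M N : Type*} [AddMonoid M] [AddMonoid N]
    {c : AddCon M} {f : M →+ N} (H : c ≤ AddCon.ker f) (H' : AddCon.ker f ≤ c) :
    Function.Injective (c.lift f H) := by
  intro x y
  induction x, y using AddCon.induction_on₂ with
  | _ a b =>
    rw [AddCon.lift_coe, AddCon.lift_coe, AddCon.eq]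
    exact fun e => H' e

theorem AddSubgroup.exists_sub_eq_of_closure_range_eq_top {M G : Type*} [AddCommMonoid M]
    [AddCommGroup G] {φ : M →+ G} (hφ : AddSubgroup.closure (Set.range φ) = ⊤) (x : G) :
    ∃ a b : M, φ a - φ b = x := by
  have hx : x ∈ AddSubgroup.closure (Set.range φ) := hφ ▸ AddSubgroup.mem_top x
  induction hx using AddSubgroup.closure_induction with
  | mem y hy =>
    obtain ⟨a, rfl⟩ := hy
    exact ⟨a, 0, by rw [map_zero, sub_zero]⟩
  | zero => exact ⟨0, 0, sub_self _⟩
  | add y z _ _ hy hz =>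
    obtain ⟨a, b, rfl⟩ := hy
    obtain ⟨c, d, rfl⟩ := hz
    exact ⟨a + c, b + d, by rw [map_add, map_add]; abel⟩
  | neg y _ hy =>
    obtain ⟨a, b, rfl⟩ := hy
    exact ⟨b, a, (neg_sub _ _).symm⟩

section QuotientMonoid

variable {Q P : Type*} [AddCommMonoid Q] [AddCommMonoid P] (h : Q →+ P)

theorem quotCon_le_ker {N : Type*} [AddCommMonoid N] {φ : P →+ N}
    (hφ : ∀ q, φ (h q) = 0) : quotCon h ≤ AddCon.ker φ := by
  rintro p p' ⟨q, q', e⟩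
  exact (AddCon.ker_rel φ).2 <| by simpa only [map_add, hφ, add_zero] using congrArg φ e

theorem saturated_quotient_of_cancellative (hP : Saturated P)
    (hc : Cancellative (quotCon h).Quotient) : Saturated (quotCon h).Quotient := by
  refine ⟨hc, fun x y z n hn e => ?_⟩
  obtain ⟨a, rfl⟩ := (quotCon h).mk'_surjective x
  obtain ⟨b, rfl⟩ := (quotCon h).mk'_surjective y
  obtain ⟨c, rfl⟩ := (quotCon h).mk'_surjective z
  rw [← map_nsmul, ← map_nsmul, ← map_add] at e
  obtain ⟨q, q', hq⟩ := (AddCon.eq (quotCon h)).1 e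
  obtain ⟨m, rfl⟩ : ∃ m, n = m + 1 := ⟨n - 1, by omega⟩
  have hlift : (m + 1) • (a + h q) = (m + 1) • b + (c + h q' + m • h q) := by
    calc (m + 1) • (a + h q) = ((m + 1) • a + h q) + m • h q := by
          rw [smul_add, succ_nsmul (h q)]; abel
      _ = (m + 1) • b + (c + h q' + m • h q) := by rw [hq]; abel
  obtain ⟨d, hd⟩ := hP.2 _ _ _ _ hn hlift
  refine ⟨(quotCon h).mk' d, ?_⟩
  rw [← map_add]
  exact (AddCon.eq (quotCon h)).2 ⟨q, 0, by rw [map_zero, add_zero, hd]⟩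

end QuotientMonoid

section SubmonoidsOfInt

variable {M : Type*} [AddCommMonoid M] {ψ : M →+ ℤ}

theorem Saturated.mem_range_of_nsmul_mem (hM : Saturated M) (hψ : Function.Injective ψ)
    (hgen : AddSubgroup.closure (Set.range ψ) = ⊤) {n : ℕ} (hn : 1 ≤ n) {x : ℤ}
    (hx : n • x ∈ Set.range ψ) : x ∈ Set.range ψ := by
  obtain ⟨c, hc⟩ := hx
  obtain ⟨a, b, rfl⟩ := AddSubgroup.exists_sub_eq_of_closure_range_eq_top hgen x
  have hab : n • a = n • b + c := hψ <| by
    rw [map_add, map_nsmul, map_nsmul, hc, smul_sub, add_sub_cancel]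
  obtain ⟨d, rfl⟩ := hM.2 a b c n hn hab
  exact ⟨d, by rw [map_add, add_sub_cancel_left]⟩

theorem Saturated.sign_mem_range (hM : Saturated M) (hψ : Function.Injective ψ)
    (hgen : AddSubgroup.closure (Set.range ψ) = ⊤) {a : M} (ha : ψ a ≠ 0) :
    (ψ a).sign ∈ Set.range ψ :=
  hM.mem_range_of_nsmul_mem hψ hgen (Int.natAbs_pos.2 ha)
    ⟨a, by rw [nsmul_eq_mul, mul_comm, Int.sign_mul_natAbs]⟩

theorem surjective_of_one_mem_range_of_neg_one_mem_range (h1 : 1 ∈ Set.range ψ)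
    (hm1 : -1 ∈ Set.range ψ) : Function.Surjective ψ := by
  simp only [← AddMonoidHom.coe_mrange, SetLike.mem_coe] at h1 hm1
  intro x
  change x ∈ AddMonoidHom.mrange ψ
  induction x using Int.induction_on with
  | zero => exact zero_mem _
  | succ i hi => exact add_mem hi h1
  | pred i hi => exact sub_eq_add_neg (-(i : ℤ)) 1 ▸ add_mem hi hm1

theorem nonempty_addEquiv_nat_of_nonneg (hψ : Function.Injective ψ) (hnonneg : ∀ a, 0 ≤ ψ a)
    (h1 : 1 ∈ Set.range ψ) : Nonempty (M ≃+ ℕ) := by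
  obtain ⟨e, he⟩ := h1
  let f : M →+ ℕ :=
    { toFun := fun a => (ψ a).toNat
      map_zero' := by rw [map_zero, Int.toNat_zero]
      map_add' := fun a b => by rw [map_add, Int.toNat_add (hnonneg a) (hnonneg b)] }
  have hf : ∀ a, (f a : ℤ) = ψ a := fun a => Int.toNat_of_nonneg (hnonneg a)
  refine ⟨AddEquiv.ofBijective f ⟨fun a b hab => hψ ?_, fun k => ⟨k • e, ?_⟩⟩⟩
  · rw [← hf, ← hf, hab]
  · exact Nat.cast_injective ((hf (k • e)).trans (by rw [map_nsmul, he, nsmul_one]))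

theorem Saturated.subsingleton_or_nonempty_addEquiv (hM : Saturated M)
    (hψ : Function.Injective ψ) (hgen : AddSubgroup.closure (Set.range ψ) = ⊤) :
    Subsingleton M ∨ Nonempty (M ≃+ ℕ) ∨ Nonempty (M ≃+ ℤ) := by
  have one_mem {a} (ha : 0 < ψ a) : 1 ∈ Set.range ψ :=
    Int.sign_eq_one_of_pos ha ▸ hM.sign_mem_range hψ hgen ha.ne'
  have neg_one_mem {a} (ha : ψ a < 0) : -1 ∈ Set.range ψ :=
    Int.sign_eq_neg_one_of_neg ha ▸ hM.sign_mem_range hψ hgen ha.ne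
  by_cases hpos : ∃ a, 0 < ψ a <;> by_cases hneg : ∃ a, ψ a < 0
  · obtain ⟨a, ha⟩ := hpos
    obtain ⟨b, hb⟩ := hneg
    exact .inr <| .inr ⟨AddEquiv.ofBijective ψ
      ⟨hψ, surjective_of_one_mem_range_of_neg_one_mem_range (one_mem ha) (neg_one_mem hb)⟩⟩
  · obtain ⟨a, ha⟩ := hpos
    simp only [not_exists, not_lt] at hneg
    exact .inr <| .inl <| nonempty_addEquiv_nat_of_nonneg hψ hneg (one_mem ha)
  · obtain ⟨b, hb⟩ := hneg
    simp only [not_exists, not_lt] at hpos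
    obtain ⟨e, he⟩ := neg_one_mem hb
    exact .inr <| .inl <| nonempty_addEquiv_nat_of_nonneg (ψ := -ψ) (neg_injective.comp hψ)
      (fun a => neg_nonneg.2 (hpos a)) ⟨e, by rw [AddMonoidHom.neg_apply, he, neg_neg]⟩
  · simp only [not_exists, not_lt] at hpos hneg
    have hzero a : ψ a = 0 := le_antisymm (hpos a) (hneg a)
    exact .inl ⟨fun a b => hψ <| by rw [hzero a, hzero b]⟩

end SubmonoidsOfInt

/-- The hypothesis `P^gp/Q^gp ≅ ℤ` is encoded elementwise by a homomorphism `φ : P →+ ℤ`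
vanishing on `Q`, whose fibers are exactly the `Q`-congruence classes (so that the
induced map `P^gp/Q^gp → ℤ` is injective) and whose range generates `ℤ` as a group
(so that the induced map is surjective). -/
theorem quotient_saturated_of_cyclic_general {Q P : Type*} [AddCommMonoid Q] [AddCommMonoid P]
    (h : Q →+ P) (hsat : Saturated P)
    (hcyc : ∃ φ : P →+ ℤ,
      (∀ q : Q, φ (h q) = 0) ∧
      (∀ p p' : P, φ p = φ p' → ∃ q q' : Q, p + h q = p' + h q') ∧
      AddSubgroup.closure (Set.range φ) = ⊤) :
    Saturated (quotCon h).Quotient ∧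
      (Subsingleton (quotCon h).Quotient ∨
        Nonempty ((quotCon h).Quotient ≃+ ℕ) ∨
        Nonempty ((quotCon h).Quotient ≃+ ℤ)) := by
  obtain ⟨φ, hφQ, hφfib, hφgen⟩ := hcyc
  have hle := quotCon_le_ker h hφQ
  let ψ := (quotCon h).lift φ hle
  have hψ : Function.Injective ψ := AddCon.lift_injective_of_ker_le hle hφfib
  have hψgen : AddSubgroup.closure (Set.range ψ) = ⊤ := by
    rwa [← AddMonoidHom.coe_mrange, AddCon.lift_range, AddMonoidHom.coe_mrange]
  have hsatQ : Saturated (quotCon h).Quotient :=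
    saturated_quotient_of_cancellative h hsat
      (Cancellative.of_injective (fun _ _ _ => add_right_cancel) ψ hψ)
  exact ⟨hsatQ, hsatQ.subsingleton_or_nonempty_addEquiv hψ hψgen⟩

/-- For an injective, integral homomorphism `h : Q →+ P` of fine, sharp monoids,
without nilpotents, with `P` saturated and `P^gp/Q^gp ≅ ℤ`, the quotient monoid `P/Q`
is saturated; in fact it is isomorphic to `0`, `ℕ` or `ℤ`.

The hypothesis `P^gp/Q^gp ≅ ℤ` is encoded elementwise by a homomorphism `φ : P →+ ℤ`
vanishing on `Q`, whose fibers are exactly the `Q`-congruence classes (so that the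
induced map `P^gp/Q^gp → ℤ` is injective) and whose range generates `ℤ` as a group
(so that the induced map is surjective). -/
theorem quotient_saturated_of_cyclic {Q P : Type*} [AddCommMonoid Q] [AddCommMonoid P]
    (hQsharp : Sharp Q) (hQcanc : Cancellative Q) (hQfg : AddMonoid.FG Q)
    (hPsharp : Sharp P) (hPcanc : Cancellative P) (hPfg : AddMonoid.FG P)
    (h : Q →+ P) (hinj : Function.Injective h) (hint : IntegralHom h)
    (hnil : WithoutNilpotents h) (hsat : Saturated P)
    (hcyc : ∃ φ : P →+ ℤ,
      (∀ q : Q, φ (h q) = 0) ∧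
      (∀ p p' : P, φ p = φ p' → ∃ q q' : Q, p + h q = p' + h q') ∧
      AddSubgroup.closure (Set.range φ) = ⊤) :
    Saturated (quotCon h).Quotient ∧
      (Subsingleton (quotCon h).Quotient ∨
        Nonempty ((quotCon h).Quotient ≃+ ℕ) ∨
        Nonempty ((quotCon h).Quotient ≃+ ℤ)) :=
  quotient_saturated_of_cyclic_general h hsat hcyc
end

section
/- Let h : Q → P be an injective, integral homomorphism of fine, sharp additive commutative monoids, without nilpotents, and suppose the quotient monoid P/Q is isomorphic to ℕ. Then there exists a unique element p ∈ P such that the homomorphism Q ⊕ ℕ → P, (q, n) ↦ h(q) + n•p, is an isomorphism of monoids. -/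
/-! The class map `P → P/Q ≅ ℕ` is a degree, and elements of equal degree are congruent.
Since `P` is fine and sharp, every element has finitely many divisors (Dickson's lemma), so
peeling off summands `h q` with `q ≠ 0` terminates in a `Q`-primitive element; starting from an
element of degree one this produces `p`. If `x` has degree `n`, then `x ∼ n • p`, and integrality
gives `x = p₀ + h q₄`, `n • p = p₀ + h q₃`; were `q₃ ≠ 0`, then `n • p ∈ I_Q`, hence `p ∈ I_Q` as
there are no nilpotents, contradicting primitivity. So `x = h q₄ + n • p`. Any `p'` inducing an
isomorphism is itself primitive of degree one, and integrality forces two congruent primitive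
elements to be equal. -/

section
variable {M : Type*} [AddCommMonoid M]

theorem Sharp.eq_zero_of_sum_eq_zero (hM : Sharp M) {ι : Type*} {s : Finset ι} {f : ι → M}
    (hsum : ∑ i ∈ s, f i = 0) : ∀ i ∈ s, f i = 0 := by
  induction s using Finset.cons_induction with
  | empty => simp
  | cons a s _ ih =>
    rw [Finset.sum_cons] at hsum
    rintro i hi
    rcases Finset.mem_cons.mp hi with rfl | hi
    · exact hM _ _ hsum
    · exact ih (hM _ _ ((add_comm _ _).trans hsum)) i hi

theorem Sharp.eq_zero_of_nsmul_eq_zero_s12 (hM : Sharp M) {n : ℕ} {x : M} (hx : x ≠ 0)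
    (hnx : n • x = 0) : n = 0 := by
  cases n with
  | zero => rfl
  | succ m => exact absurd (hM _ _ ((add_comm _ _).trans ((succ_nsmul x m).symm.trans hnx))) hx

theorem AddMonoid.FG.exists_finset_zero_notMem_closure_eq_top (hM : AddMonoid.FG M) :
    ∃ s : Finset M, 0 ∉ s ∧ AddSubmonoid.closure (s : Set M) = ⊤ := by
  classical
  obtain ⟨s, hs⟩ := hM.fg_top
  refine ⟨s.erase 0, Finset.notMem_erase 0 s, eq_top_iff.2 ?_⟩
  rw [← hs, AddSubmonoid.closure_le]
  intro x hx
  by_cases hx0 : x = 0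
  · subst hx0
    exact zero_mem _
  · exact AddSubmonoid.subset_closure (Finset.mem_erase.2 ⟨hx0, hx⟩)

theorem isAntichain_setOf_sum_nsmul_eq (hsharp : Sharp M) (hcanc : Cancellative M)
    {ι : Type*} [Fintype ι] {g : ι → M} (hg : ∀ i, g i ≠ 0) (x : M) :
    IsAntichain (· ≤ ·) {v : ι → ℕ | ∑ i, v i • g i = x} := by
  intro u hu w hw hne hle
  apply hne
  have hdiff : ∑ i, (w - u) i • g i + x = 0 + x := by
    nth_rw 1 [← hu, ← hw.out, zero_add]
    rw [← Finset.sum_add_distrib]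
    refine Finset.sum_congr rfl fun i _ => ?_
    rw [← add_nsmul, Pi.sub_apply, Nat.sub_add_cancel (hle i)]
  have hzero := hsharp.eq_zero_of_sum_eq_zero (hcanc _ _ _ hdiff)
  funext i
  have hi : w i - u i = 0 := hsharp.eq_zero_of_nsmul_eq_zero_s12 (hg i) (hzero i (Finset.mem_univ i))
  have hui : u i ≤ w i := hle i
  omega

theorem finite_setOf_exists_add_eq (hsharp : Sharp M) (hcanc : Cancellative M)
    (hfg : AddMonoid.FG M) (x : M) : {a : M | ∃ b, a + b = x}.Finite := by
  classical
  obtain ⟨s, hs0, hs⟩ := hfg.exists_finset_zero_notMem_closure_eq_top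
  let σ : (s → ℕ) → M := fun v => ∑ i, v i • (i : M)
  have hσ : ∀ a, ∃ v, σ v = a := fun a => by
    obtain ⟨v, hv⟩ := AddSubmonoid.mem_closure_range_iff_of_fintype.1
      (show a ∈ AddSubmonoid.closure (Set.range ((↑) : s → M)) by simp [hs])
    exact ⟨v, hv.symm⟩
  have hfiber : {v | σ v = x}.Finite :=
    WellQuasiOrderedLE.finite_of_isAntichain <|
      isAntichain_setOf_sum_nsmul_eq hsharp hcanc (fun i hi => hs0 (hi ▸ i.2)) x
  refine ((hfiber.biUnion fun u _ => Set.finite_Iic u).image σ).subset ?_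
  rintro a ⟨b, rfl⟩
  obtain ⟨u, rfl⟩ := hσ a
  obtain ⟨w, rfl⟩ := hσ b
  refine ⟨u, Set.mem_biUnion (x := u + w) ?_ (le_self_add : u ≤ u + w), rfl⟩
  simp only [σ, Set.mem_ofPred_eq, Pi.add_apply, add_nsmul, Finset.sum_add_distrib]

end

section
variable {Q P N : Type*} [AddCommMonoid Q] [AddCommMonoid P] [AddCommMonoid N] {h : Q →+ P}

theorem exists_qPrimitive_add (hsharp : Sharp P) (hcanc : Cancellative P)
    (hfin : ∀ x : P, {a : P | ∃ b, a + b = x}.Finite) (hinj : Function.Injective h) (x : P) :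
    ∃ (p : P) (q : Q), QPrimitive h p ∧ x = p + h q := by
  induction hn : {a : P | ∃ b, a + b = x}.ncard using Nat.strong_induction_on generalizing x with
  | _ n ih =>
  by_cases hx : QPrimitive h x
  · exact ⟨x, 0, hx, by simp⟩
  obtain ⟨p', q, rfl, hq⟩ : ∃ p' q, x = p' + h q ∧ q ≠ 0 := by simpa [QPrimitive] using hx
  have hlt : {a | ∃ b, a + b = p'}.ncard < n := by
    rw [← hn]
    refine Set.ncard_lt_ncard ⟨fun a ⟨b, hab⟩ => ⟨b + h q, by rw [← add_assoc, hab]⟩,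
      fun hsub => hq ?_⟩ (hfin _)
    obtain ⟨b, hb⟩ := hsub ⟨0, add_zero _⟩
    have hqb : h q + b = 0 := hcanc _ _ p' <| by
      rw [zero_add]
      conv_rhs => rw [← hb]
      ac_rfl
    exact hinj ((hsharp _ _ hqb).trans (map_zero h).symm)
  obtain ⟨p, q', hp, rfl⟩ := ih _ hlt p' rfl
  exact ⟨p, q' + q, hp, by rw [map_add, add_assoc]⟩

theorem QPrimitive.not_memIQ {p : P} (hp : QPrimitive h p) : ¬ MemIQ h p := by
  rintro ⟨q, hq, p', rfl⟩
  exact hq (hp p' q (add_comm _ _))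

theorem not_memIQ_zero (hsharp : Sharp P) (hinj : Function.Injective h) : ¬ MemIQ h 0 := by
  rintro ⟨q, hq, p', hqp'⟩
  exact hq (hinj ((hsharp _ _ hqp'.symm).trans (map_zero h).symm))

theorem QPrimitive.not_memIQ_nsmul (hsharp : Sharp P) (hinj : Function.Injective h)
    (hnil : WithoutNilpotents h) {p : P} (hp : QPrimitive h p) (n : ℕ) :
    ¬ MemIQ h (n • p) := by
  rcases Nat.eq_zero_or_pos n with rfl | hn
  · simpa using not_memIQ_zero hsharp hinj
  · exact fun hnp => hp.not_memIQ (hnil p n hn hnp)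

theorem QPrimitive.eq_add_nsmul_of_quotCon (hint : IntegralHom h) (hsharp : Sharp P)
    (hinj : Function.Injective h) (hnil : WithoutNilpotents h) {p x : P} (hp : QPrimitive h p)
    {n : ℕ} (hx : quotCon h x (n • p)) : ∃ q, x = h q + n • p := by
  obtain ⟨q, q', hqq'⟩ := hx
  obtain ⟨q₃, q₄, p₀, rfl, hnp, -⟩ := hint q q' _ _ hqq'
  obtain rfl : q₃ = 0 := by
    by_contra hq₃
    exact hp.not_memIQ_nsmul hsharp hinj hnil n ⟨q₃, hq₃, p₀, hnp.trans (add_comm _ _)⟩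
  rw [map_zero, add_zero] at hnp
  exact ⟨q₄, by rw [hnp, add_comm]⟩

theorem QPrimitive.eq_of_quotCon (hint : IntegralHom h) {p p' : P} (hp : QPrimitive h p)
    (hp' : QPrimitive h p') (hpp' : quotCon h p p') : p = p' := by
  obtain ⟨q, q', hqq'⟩ := hpp'
  obtain ⟨q₃, q₄, p₀, rfl, rfl, -⟩ := hint q q' _ _ hqq'
  rw [hp _ _ rfl, hp' _ _ rfl]

theorem qPrimitive_of_bijective (hsharp : Sharp Q) {p : P}
    (hbij : Function.Bijective fun x : Q × ℕ => h x.1 + x.2 • p) : QPrimitive h p := by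
  intro p' q hp
  obtain ⟨⟨a, m⟩, ham : h a + m • p = p'⟩ := hbij.2 p'
  have hsum : ((0 : Q), 1) = (a + q, m) := hbij.1 <| by
    change h 0 + 1 • p = h (a + q) + m • p
    rw [map_zero, zero_add, one_smul, map_add, add_right_comm, ham, ← hp]
  exact hsharp q a ((add_comm q a).trans (congrArg Prod.fst hsum).symm)

theorem quotCon_coe_map_eq_zero (q : Q) : ((h q : P) : (quotCon h).Quotient) = 0 :=
  (AddCon.eq _).2 ⟨0, q, by simp⟩

theorem quotCon_iff_apply_eq (e : (quotCon h).Quotient ≃+ N) {x y : P} :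
    quotCon h x y ↔ e x = e y :=
  (AddCon.eq _).symm.trans e.injective.eq_iff.symm

theorem apply_quotCon_coe_map_add_nsmul (e : (quotCon h).Quotient ≃+ N) (q : Q) (n : ℕ) (p : P) :
    e ↑(h q + n • p) = n • e ↑p := by
  rw [AddCon.coe_add, quotCon_coe_map_eq_zero, zero_add]
  exact map_nsmul (e.toAddMonoidHom.comp (quotCon h).mk') n p

theorem surjective_apply_quotCon_coe (e : (quotCon h).Quotient ≃+ N) :
    Function.Surjective fun x : P => e x :=
  e.surjective.comp AddCon.mk'_surjective

theorem QPrimitive.bijective (hint : IntegralHom h) (hsharp : Sharp P) (hcanc : Cancellative P)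
    (hinj : Function.Injective h) (hnil : WithoutNilpotents h) (e : (quotCon h).Quotient ≃+ ℕ)
    {p : P} (hp : QPrimitive h p) (hp1 : e p = 1) :
    Function.Bijective fun x : Q × ℕ => h x.1 + x.2 • p := by
  have hdeg (q : Q) (n : ℕ) : e ↑(h q + n • p) = n := by
    rw [apply_quotCon_coe_map_add_nsmul, hp1, smul_eq_mul, mul_one]
  refine ⟨?_, fun x => ?_⟩
  · rintro ⟨q₁, n₁⟩ ⟨q₂, n₂⟩ (heq : h q₁ + n₁ • p = h q₂ + n₂ • p)
    obtain rfl : n₁ = n₂ := by rw [← hdeg q₁ n₁, heq, hdeg]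
    rw [hinj (hcanc _ _ _ heq)]
  · have hx : quotCon h x (e x • p) := by
      rw [quotCon_iff_apply_eq e, ← zero_add (_ • p), ← map_zero h, hdeg]
    obtain ⟨q, hq⟩ := hp.eq_add_nsmul_of_quotCon hint hsharp hinj hnil hx
    exact ⟨(q, e x), hq.symm⟩

theorem apply_quotCon_coe_eq_one_of_bijective (e : (quotCon h).Quotient ≃+ ℕ) {p : P}
    (hbij : Function.Bijective fun x : Q × ℕ => h x.1 + x.2 • p) : e p = 1 := by
  obtain ⟨⟨q, n⟩, hqn⟩ := (surjective_apply_quotCon_coe e).comp hbij.2 1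
  rw [Function.comp_apply, apply_quotCon_coe_map_add_nsmul, smul_eq_mul] at hqn
  exact Nat.eq_one_of_mul_eq_one_left hqn

end

theorem splitting_of_quotient_nat_general {Q P : Type*} [AddCommMonoid Q] [AddCommMonoid P]
    (hQsharp : Sharp Q)
    (hPsharp : Sharp P) (hPcanc : Cancellative P) (hPfg : AddMonoid.FG P)
    (h : Q →+ P) (hinj : Function.Injective h) (hint : IntegralHom h)
    (hnil : WithoutNilpotents h)
    (hquot : Nonempty ((quotCon h).Quotient ≃+ ℕ)) :
    ∃! p : P, Function.Bijective (fun x : Q × ℕ => h x.1 + x.2 • p) := by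
  obtain ⟨e⟩ := hquot
  obtain ⟨x, hx : e x = 1⟩ := surjective_apply_quotCon_coe e 1
  obtain ⟨p, q, hp, rfl⟩ := exists_qPrimitive_add hPsharp hPcanc
    (finite_setOf_exists_add_eq hPsharp hPcanc hPfg) hinj x
  have hp1 : e p = 1 := by
    rwa [add_comm, ← one_smul ℕ p, apply_quotCon_coe_map_add_nsmul, one_smul] at hx
  refine ⟨p, hp.bijective hint hPsharp hPcanc hinj hnil e hp1, fun p' hp' => ?_⟩
  refine (hp.eq_of_quotCon hint (qPrimitive_of_bijective hQsharp hp') ?_).symm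
  rw [quotCon_iff_apply_eq e, hp1, apply_quotCon_coe_eq_one_of_bijective e hp']

/-- For an injective, integral homomorphism `h : Q →+ P` of fine, sharp monoids,
without nilpotents, with quotient monoid `P/Q` isomorphic to `ℕ`, there is a unique
`p ∈ P` such that `(q, n) ↦ h q + n • p` is an isomorphism `Q ⊕ ℕ ≅ P`. -/
theorem splitting_of_quotient_nat {Q P : Type*} [AddCommMonoid Q] [AddCommMonoid P]
    (hQsharp : Sharp Q) (hQcanc : Cancellative Q) (hQfg : AddMonoid.FG Q)
    (hPsharp : Sharp P) (hPcanc : Cancellative P) (hPfg : AddMonoid.FG P)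
    (h : Q →+ P) (hinj : Function.Injective h) (hint : IntegralHom h)
    (hnil : WithoutNilpotents h)
    (hquot : Nonempty ((quotCon h).Quotient ≃+ ℕ)) :
    ∃! p : P, Function.Bijective (fun x : Q × ℕ => h x.1 + x.2 • p) :=
  splitting_of_quotient_nat_general hQsharp hPsharp hPcanc hPfg h hinj hint hnil hquot
end

section
/- Let h : Q → P be an injective, integral homomorphism of fine, sharp additive commutative monoids, without nilpotents, and suppose the quotient monoid P/Q is isomorphic to ℤ. Then there exist a unique q0 ∈ Q and elements p1, p-1 ∈ P (unique up to interchanging p1 and p-1) with p1 + p-1 = h(q0) such that the square formed by the maps ℕ → Q (n ↦ n•q0), the diagonal Δ : ℕ → ℕ × ℕ (n ↦ (n, n)), h : Q → P, and ℕ × ℕ → P ((m, n) ↦ m•p1 + n•p-1) is cocartesian in the category of additive commutative monoids; that is, for every additive commutative monoid T and homomorphisms u : Q → T and v : ℕ × ℕ → T with v(1,1) = u(q0), there is a unique homomorphism w : P → T with w ∘ h = u, w(p1) = v(1,0), and w(p-1) = v(0,1). -/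
universe u

/-- The square formed by `n ↦ n • q0 : ℕ → Q`, the diagonal `Δ : ℕ → ℕ × ℕ`,
`h : Q → P`, and `(m, n) ↦ m • p1 + n • pm1 : ℕ × ℕ → P` is cocartesian in the
category of additive commutative monoids: for every monoid `T` and homomorphisms
`u : Q →+ T`, `v : ℕ × ℕ →+ T` with `v (1,1) = u q0` there is a unique `w : P →+ T`
with `w ∘ h = u`, `w p1 = v (1,0)` and `w pm1 = v (0,1)`. -/
def IsNodePushoutSquare {Q P : Type u} [AddCommMonoid Q] [AddCommMonoid P]
    (h : Q →+ P) (q0 : Q) (p1 pm1 : P) : Prop :=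
  ∀ (T : Type u) [AddCommMonoid T] (u : Q →+ T) (v : ℕ × ℕ →+ T),
    v (1, 1) = u q0 →
    ∃! w : P →+ T, w.comp h = u ∧ w p1 = v (1, 0) ∧ w pm1 = v (0, 1)

open Function

section Fine

variable {P : Type*} [AddCommMonoid P]

theorem wellFounded_properAddDivisor (hsharp : Sharp P) (hcanc : Cancellative P)
    (hfg : AddMonoid.FG P) : WellFounded fun a b : P => ∃ c ≠ 0, b = a + c := by
  have : Module.Finite ℕ P := Module.Finite.iff_addMonoid_fg.2 hfg
  obtain ⟨n, φ, hφ⟩ := Module.Finite.exists_fin' ℕ P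
  rw [wellFounded_iff_isEmpty_descending_chain]
  refine ⟨fun ⟨f, hf⟩ => ?_⟩
  choose c hc0 hc using hf
  have hdvd : ∀ i k, ∃ d, f i = f (i + k) + d := by
    intro i k
    induction k with
    | zero => exact ⟨0, (add_zero _).symm⟩
    | succ k ih =>
      obtain ⟨d, hd⟩ := ih
      exact ⟨c (i + k) + d, by rw [hd, hc, add_assoc, ← add_assoc i]⟩
  choose g hg using fun i => hφ (f i)
  obtain ⟨i, j, hij, hle⟩ := wellQuasiOrdered_le g
  obtain ⟨d, hd⟩ := hdvd (i + 1) (j - (i + 1))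
  rw [Nat.add_sub_cancel' hij] at hd
  -- Dickson's lemma makes `f i` divide `f j`, while `f j` properly divides `f i`.
  have hji : f j = f i + φ (g j - g i) := by
    rw [← hg i, ← hg j, ← map_add, add_tsub_cancel_of_le hle]
  have hloop : 0 + f i = (c i + (φ (g j - g i) + d)) + f i := by
    calc 0 + f i = f i := zero_add _
      _ = f (i + 1) + c i := hc i
      _ = (c i + (φ (g j - g i) + d)) + f i := by rw [hd, hji]; abel
  exact hc0 i (hsharp _ _ (hcanc _ _ _ hloop).symm)

end Fine

section Integral

variable {Q P : Type*} [AddCommMonoid Q] [AddCommMonoid P] {h : Q →+ P}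

theorem exists_quotCon_qPrimitive (hsharp : Sharp P) (hcanc : Cancellative P)
    (hfg : AddMonoid.FG P) (hinj : Injective h) (p : P) :
    ∃ p₀, quotCon h p₀ p ∧ QPrimitive h p₀ := by
  obtain ⟨p₀, hp₀, hmin⟩ := (wellFounded_properAddDivisor hsharp hcanc hfg).has_min
    {x | quotCon h x p} ⟨p, (quotCon h).refl p⟩
  refine ⟨p₀, hp₀, fun p' q hq => by_contra fun hq0 => hmin p' ?_ ⟨h q, ?_, hq⟩⟩
  · exact (quotCon h).trans ⟨q, 0, by rw [hq, map_zero, add_zero]⟩ hp₀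
  · exact fun h0 => hq0 (hinj (h0.trans (map_zero h).symm))

theorem IntegralHom.exists_eq_add_of_quotCon (hint : IntegralHom h) {p p' : P}
    (hr : quotCon h p p') : ∃ r q q', p = r + h q ∧ p' = r + h q' := by
  obtain ⟨a, b, e⟩ := hr
  obtain ⟨q3, q4, r, h1, h2, -⟩ := hint a b p p' e
  exact ⟨r, q4, q3, h1, h2⟩

theorem exists_eq_of_quotCon_zero (hsharp : Sharp P) (hint : IntegralHom h) {p : P}
    (hr : quotCon h p 0) : ∃ q, p = h q := by
  obtain ⟨r, q, q', rfl, h0⟩ := hint.exists_eq_add_of_quotCon hr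
  rw [hsharp r (h q') h0.symm, zero_add]
  exact ⟨q, rfl⟩

theorem QPrimitive.eq_of_eq_add {p a : P} {q : Q} (hp : QPrimitive h p) (hq : p = h q + a) :
    p = a := by
  rw [hq, hp a q (by rw [hq, add_comm]), map_zero, zero_add]

theorem QPrimitive.exists_eq_add_nsmul (hsharp : Sharp P) (hint : IntegralHom h)
    (hnil : WithoutNilpotents h) {p p' : P} (hp : QPrimitive h p) (n : ℕ)
    (hr : quotCon h p' (n • p)) : ∃ q, p' = h q + n • p := by
  rcases n.eq_zero_or_pos with rfl | hn
  · simpa using exists_eq_of_quotCon_zero hsharp hint (by simpa using hr)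
  obtain ⟨r, q, q', rfl, hnp⟩ := hint.exists_eq_add_of_quotCon hr
  by_cases hq' : q' = 0
  · exact ⟨q, by rw [hnp, hq', map_zero, add_zero, add_comm]⟩
  -- otherwise `n • p ∈ I_Q`, hence `p ∈ I_Q`, contradicting primitivity
  obtain ⟨s, hs, p'', hp''⟩ := hnil p n hn ⟨q', hq', r, by rw [hnp, add_comm]⟩
  exact absurd (hp p'' s (by rw [hp'', add_comm])) hs

end Integral

section Node

variable {Q P : Type*} [AddCommMonoid Q] [AddCommMonoid P] (h : Q →+ P)

def nodeHom (a b : P) : Q × (ℕ × ℕ) →+ P :=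
  h.coprod ((multiplesHom P a).coprod (multiplesHom P b))

@[simp]
theorem nodeHom_apply (a b : P) (q : Q) (m n : ℕ) :
    nodeHom h a b (q, (m, n)) = h q + (m • a + n • b) := rfl

@[simp]
theorem nodeHom_mk_zero (a b : P) (q : Q) : nodeHom h a b (q, 0) = h q := by
  simp [← Prod.mk_zero_zero]

/-- `(Q × ℕ²) ⧸ pushoutCon q0` is the pushout of `Q ← ℕ → ℕ²` in additive commutative monoids;
`nodeHom h p1 pm1` is the comparison map from `Q × ℕ²` to `P`. -/
def pushoutCon (q0 : Q) : AddCon (Q × (ℕ × ℕ)) :=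
  addConGen fun x y => x = (0, (1, 1)) ∧ y = (q0, 0)

variable {h}

theorem nodeHom_surjective_comm {a b : P} (hsurj : Surjective (nodeHom h a b)) :
    Surjective (nodeHom h b a) := by
  intro p
  obtain ⟨⟨q, m, n⟩, rfl⟩ := hsurj p
  exact ⟨(q, (n, m)), by simp [add_comm]⟩

theorem nodeHom_mk_add_add {a b : P} {q0 : Q} (hsum : a + b = h q0) (q : Q) (m n d : ℕ) :
    nodeHom h a b (q, (m + d, n + d)) = h (q + d • q0) + (m • a + n • b) := by
  simp only [nodeHom_apply, map_add, map_nsmul, ← hsum, add_nsmul, nsmul_add]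
  abel

theorem deg_nodeHom (deg : P →+ ℤ) (hdeg : ∀ q, deg (h q) = 0) (a b : P) (q : Q) (m n : ℕ) :
    deg (nodeHom h a b (q, (m, n))) = m * deg a + n * deg b := by
  simp [hdeg]

end Node

section Pushout

variable {Q P : Type u} [AddCommMonoid Q] [AddCommMonoid P] {h : Q →+ P} {q0 : Q} {p1 pm1 : P}

theorem isNodePushoutSquare_of_ker_le (hsurj : Surjective (nodeHom h p1 pm1))
    (hker : AddCon.ker (nodeHom h p1 pm1) ≤ pushoutCon q0) :
    IsNodePushoutSquare h q0 p1 pm1 := by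
  intro T _ u v hv
  have hψ : pushoutCon q0 ≤ AddCon.ker (u.coprod v) :=
    AddCon.addConGen_le.2 fun x y ⟨hx, hy⟩ => by simp [AddCon.ker_rel, hx, hy, hv]
  let w : P →+ T := ((AddCon.ker _).lift (u.coprod v) (hker.trans hψ)).comp
    (AddCon.quotientKerEquivOfSurjective _ hsurj).symm.toAddMonoidHom
  have hw : ∀ x, w (nodeHom h p1 pm1 x) = u.coprod v x := fun x => by
    have hx : (AddCon.quotientKerEquivOfSurjective _ hsurj).symm (nodeHom h p1 pm1 x) = x :=
      (AddEquiv.symm_apply_eq _).2 rfl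
    simp only [w, AddMonoidHom.comp_apply, AddEquiv.coe_toAddMonoidHom, hx, AddCon.lift_coe]
  have hv_apply : ∀ m n : ℕ, v (m, n) = m • v (1, 0) + n • v (0, 1) := fun m n => by
    rw [← map_nsmul, ← map_nsmul, ← map_add]
    simp
  refine ⟨w, ⟨?_, ?_, ?_⟩, fun w' ⟨hw'h, hw'1, hw'm1⟩ => ?_⟩
  · ext q
    simpa using hw (q, 0)
  · simpa using hw (0, (1, 0))
  · simpa using hw (0, (0, 1))
  · ext p
    obtain ⟨⟨q, m, n⟩, rfl⟩ := hsurj p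
    rw [hw, AddMonoidHom.coprod_apply, hv_apply]
    simp [hw'1, hw'm1, ← hw'h]

theorem IsNodePushoutSquare.surjective_nodeHom (hsq : IsNodePushoutSquare h q0 p1 pm1)
    (hsum : p1 + pm1 = h q0) : Surjective (nodeHom h p1 pm1) := by
  set Φ := nodeHom h p1 pm1
  obtain ⟨w, ⟨hwh, hw1, hwm1⟩, -⟩ := hsq _ (Φ.mrangeRestrict.comp (AddMonoidHom.inl _ _))
    (Φ.mrangeRestrict.comp (AddMonoidHom.inr _ _)) (Subtype.ext (by simp [Φ, hsum]))
  obtain ⟨_, -, huniq⟩ := hsq P h (Φ.comp (AddMonoidHom.inr _ _)) (by simp [Φ, hsum])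
  -- `w` retracts `P` onto the image of `Φ`, and uniqueness makes this retraction the identity
  have hid : (AddMonoidHom.mrange Φ).subtype.comp w = AddMonoidHom.id P := by
    refine (huniq _ ⟨?_, ?_, ?_⟩).trans (huniq _ ⟨by ext; simp, by simp [Φ], by simp [Φ]⟩).symm
    · ext q
      simpa [Φ] using congrArg Subtype.val (DFunLike.congr_fun hwh q)
    · simpa using congrArg Subtype.val hw1
    · simpa using congrArg Subtype.val hwm1
  intro p
  obtain ⟨x, hx⟩ := (w p).2
  exact ⟨x, hx.trans (DFunLike.congr_fun hid p)⟩

end Pushout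

section Grading

variable {Q P : Type*} [AddCommMonoid Q] [AddCommMonoid P] {h : Q →+ P} (deg : P →+ ℤ)

theorem ker_nodeHom_le_pushoutCon (hdeg : ∀ q, deg (h q) = 0) (hcanc : Cancellative P)
    (hinj : Injective h) {q0 : Q} {p1 pm1 : P} (h1 : deg p1 = 1) (hm1 : deg pm1 = -1)
    (hsum : p1 + pm1 = h q0) :
    AddCon.ker (nodeHom h p1 pm1) ≤ pushoutCon q0 := by
  have hshift : ∀ (q q' : Q) (m n d : ℕ),
      nodeHom h p1 pm1 (q, (m + d, n + d)) = nodeHom h p1 pm1 (q', (m, n)) →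
      pushoutCon q0 (q, (m + d, n + d)) (q', (m, n)) := by
    intro q q' m n d hx
    rw [nodeHom_mk_add_add hsum, nodeHom_apply] at hx
    obtain rfl := hinj (hcanc _ _ _ hx)
    have hgen : pushoutCon q0 (d • (0, (1, 1))) (d • (q0, 0)) :=
      (pushoutCon q0).nsmul d (AddCon.le_addConGen _ _ ⟨rfl, rfl⟩)
    convert (pushoutCon q0).add ((pushoutCon q0).refl (q, (m, n))) hgen using 1 <;> simp
  rintro ⟨q, m, n⟩ ⟨q', m', n'⟩ hx
  -- comparing degrees, two points of a fibre differ by the same `d` in both `ℕ`-coordinates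
  have hdiff : (m : ℤ) - n = m' - n' := by
    have := congrArg deg ((AddCon.ker_rel _).1 hx)
    simp only [deg_nodeHom deg hdeg, h1, hm1] at this
    linarith
  rcases le_total m' m with hle | hle
  · obtain ⟨d, rfl⟩ := Nat.exists_eq_add_of_le hle
    obtain rfl : n = n' + d := by omega
    exact hshift q q' m' n' d ((AddCon.ker_rel _).1 hx)
  · obtain ⟨d, rfl⟩ := Nat.exists_eq_add_of_le hle
    obtain rfl : n' = n + d := by omega
    exact ((pushoutCon q0).symm (hshift q' q m n d ((AddCon.ker_rel _).1 hx).symm))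

theorem QPrimitive.eq_of_nodeHom_surjective (hdeg : ∀ q, deg (h q) = 0) {p a b : P} {q0 : Q}
    (hp : QPrimitive h p) (hsum : a + b = h q0) (hsurj : Surjective (nodeHom h a b))
    (hpa : deg p = deg a) (ha : deg a ≠ 0) : p = a := by
  obtain ⟨⟨q, m, n⟩, rfl⟩ := hsurj p
  have hb : deg b = -deg a := by
    have := congrArg deg hsum
    rw [map_add, hdeg] at this
    linarith
  obtain rfl : m = n + 1 := by
    rw [deg_nodeHom deg hdeg, hb] at hpa
    have : ((m : ℤ) - n - 1) * deg a = 0 := by linarith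
    have := (mul_eq_zero.1 this).resolve_right ha
    omega
  refine hp.eq_of_eq_add (q := q + n • q0) ?_
  simpa [add_comm] using nodeHom_mk_add_add hsum q 1 0 n

theorem eq_or_swap_of_nodeHom_surjective (hdeg : ∀ q, deg (h q) = 0) {q0' : Q}
    {p1 pm1 p1' pm1' : P} (hp1 : QPrimitive h p1) (hpm1 : QPrimitive h pm1) (h1 : deg p1 = 1)
    (hm1 : deg pm1 = -1) (hsum' : p1' + pm1' = h q0') (hsurj' : Surjective (nodeHom h p1' pm1')) :
    (p1' = p1 ∧ pm1' = pm1) ∨ (p1' = pm1 ∧ pm1' = p1) := by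
  have hsum'' : pm1' + p1' = h q0' := by rw [add_comm, hsum']
  have hswap := nodeHom_surjective_comm hsurj'
  have hdeg' : deg pm1' = -deg p1' := by
    have := congrArg deg hsum'
    rw [map_add, hdeg] at this
    linarith
  obtain ⟨⟨q, m, n⟩, hx⟩ := hsurj' p1
  have hunit : deg p1' * (m - n) = 1 := by
    have := congrArg deg hx
    rw [deg_nodeHom deg hdeg, hdeg', h1] at this
    linarith
  rcases Int.eq_one_or_neg_one_of_mul_eq_one hunit with h' | h'
  · have e1 := hp1.eq_of_nodeHom_surjective deg hdeg hsum' hsurj' (by rw [h1, h']) (by simp [h'])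
    have e2 := hpm1.eq_of_nodeHom_surjective deg hdeg hsum'' hswap (by rw [hm1, hdeg', h'])
      (by simp [hdeg', h'])
    exact .inl ⟨e1.symm, e2.symm⟩
  · have e1 := hpm1.eq_of_nodeHom_surjective deg hdeg hsum' hsurj' (by rw [hm1, h'])
      (by simp [h'])
    have e2 := hp1.eq_of_nodeHom_surjective deg hdeg hsum'' hswap (by rw [h1, hdeg', h', neg_neg])
      (by simp [hdeg', h'])
    exact .inr ⟨e1.symm, e2.symm⟩

theorem nodeHom_surjective (hsharp : Sharp P) (hint : IntegralHom h) (hnil : WithoutNilpotents h)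
    (hdeg : ∀ p p', deg p = deg p' → quotCon h p p') {p1 pm1 : P} (hp1 : QPrimitive h p1)
    (hpm1 : QPrimitive h pm1) (h1 : deg p1 = 1) (hm1 : deg pm1 = -1) :
    Surjective (nodeHom h p1 pm1) := by
  intro p
  obtain ⟨n, hn | hn⟩ := Int.eq_nat_or_neg (deg p)
  · obtain ⟨q, hq⟩ := hp1.exists_eq_add_nsmul hsharp hint hnil n (hdeg p _ (by simp [hn, h1]))
    exact ⟨(q, (n, 0)), by simp [hq]⟩
  · obtain ⟨q, hq⟩ := hpm1.exists_eq_add_nsmul hsharp hint hnil n (hdeg p _ (by simp [hn, hm1]))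
    exact ⟨(q, (0, n)), by simp [hq]⟩

theorem exists_node (hsharp : Sharp P) (hcanc : Cancellative P) (hfg : AddMonoid.FG P)
    (hinj : Injective h) (hint : IntegralHom h) (hsurj : Surjective deg)
    (hdeg : ∀ p p', deg p = deg p' ↔ quotCon h p p') :
    ∃ q0 p1 pm1, p1 + pm1 = h q0 ∧ QPrimitive h p1 ∧ QPrimitive h pm1 ∧
      deg p1 = 1 ∧ deg pm1 = -1 := by
  obtain ⟨x1, hx1⟩ := hsurj 1
  obtain ⟨xm1, hxm1⟩ := hsurj (-1)
  obtain ⟨p1, hp1, hprim1⟩ := exists_quotCon_qPrimitive hsharp hcanc hfg hinj x1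
  obtain ⟨pm1, hpm1, hprimm1⟩ := exists_quotCon_qPrimitive hsharp hcanc hfg hinj xm1
  rw [← (hdeg _ _).2 hp1] at hx1
  rw [← (hdeg _ _).2 hpm1] at hxm1
  obtain ⟨q0, hq0⟩ :=
    exists_eq_of_quotCon_zero hsharp hint ((hdeg (p1 + pm1) 0).1 (by simp [hx1, hxm1]))
  exact ⟨q0, p1, pm1, hq0, hprim1, hprimm1, hx1, hxm1⟩

end Grading

theorem pushout_of_quotient_int_general {Q P : Type u} [AddCommMonoid Q] [AddCommMonoid P]
    (hPsharp : Sharp P) (hPcanc : Cancellative P) (hPfg : AddMonoid.FG P)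
    (h : Q →+ P) (hinj : Function.Injective h) (hint : IntegralHom h)
    (hnil : WithoutNilpotents h)
    (hquot : Nonempty ((quotCon h).Quotient ≃+ ℤ)) :
    ∃ (q0 : Q) (p1 pm1 : P), p1 + pm1 = h q0 ∧ IsNodePushoutSquare h q0 p1 pm1 ∧
      ∀ (q0' : Q) (p1' pm1' : P), p1' + pm1' = h q0' →
        IsNodePushoutSquare h q0' p1' pm1' →
        q0' = q0 ∧ ((p1' = p1 ∧ pm1' = pm1) ∨ (p1' = pm1 ∧ pm1' = p1)) := by
  obtain ⟨e⟩ := hquot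
  set deg : P →+ ℤ := e.toAddMonoidHom.comp (quotCon h).mk'
  have hdeg : ∀ p p', deg p = deg p' ↔ quotCon h p p' := fun p p' =>
    e.injective.eq_iff.trans (AddCon.eq _)
  have hdeg_h : ∀ q, deg (h q) = 0 := fun q => by
    simpa using (hdeg (h q) 0).2 ⟨0, q, by simp⟩
  obtain ⟨q0, p1, pm1, hsum, hp1, hpm1, h1, hm1⟩ := exists_node deg hPsharp hPcanc hPfg hinj hint
    (e.surjective.comp AddCon.mk'_surjective) hdeg
  refine ⟨q0, p1, pm1, hsum, isNodePushoutSquare_of_ker_le ?_ ?_, fun q0' p1' pm1' hsum' hsq' => ?_⟩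
  · exact nodeHom_surjective deg hPsharp hint hnil (fun p p' => (hdeg p p').1) hp1 hpm1 h1 hm1
  · exact ker_nodeHom_le_pushoutCon deg hdeg_h hPcanc hinj h1 hm1 hsum
  have hnode := eq_or_swap_of_nodeHom_surjective deg hdeg_h hp1 hpm1 h1 hm1 hsum'
    (hsq'.surjective_nodeHom hsum')
  refine ⟨hinj ?_, hnode⟩
  rcases hnode with ⟨rfl, rfl⟩ | ⟨rfl, rfl⟩
  · rw [← hsum, hsum']
  · rw [← hsum, add_comm, hsum']

/-- For an injective, integral homomorphism `h : Q →+ P` of fine, sharp monoids,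
without nilpotents, with quotient monoid `P/Q` isomorphic to `ℤ`, there are a unique
`q0 ∈ Q` and elements `p1, pm1 ∈ P` (unique up to interchanging them) with
`p1 + pm1 = h q0` making the square on `Δ : ℕ → ℕ × ℕ` cocartesian. -/
theorem pushout_of_quotient_int {Q P : Type u} [AddCommMonoid Q] [AddCommMonoid P]
    (hQsharp : Sharp Q) (hQcanc : Cancellative Q) (hQfg : AddMonoid.FG Q)
    (hPsharp : Sharp P) (hPcanc : Cancellative P) (hPfg : AddMonoid.FG P)
    (h : Q →+ P) (hinj : Function.Injective h) (hint : IntegralHom h)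
    (hnil : WithoutNilpotents h)
    (hquot : Nonempty ((quotCon h).Quotient ≃+ ℤ)) :
    ∃ (q0 : Q) (p1 pm1 : P), p1 + pm1 = h q0 ∧ IsNodePushoutSquare h q0 p1 pm1 ∧
      ∀ (q0' : Q) (p1' pm1' : P), p1' + pm1' = h q0' →
        IsNodePushoutSquare h q0' p1' pm1' →
        q0' = q0 ∧ ((p1' = p1 ∧ pm1' = pm1) ∨ (p1' = pm1 ∧ pm1' = p1)) :=
  pushout_of_quotient_int_general hPsharp hPcanc hPfg h hinj hint hnil hquot
end

section
/- Let h : Q → P be an injective, integral homomorphism of fine, sharp additive commutative monoids whose quotient monoid P/Q is trivial (i.e., for every p ∈ P there exist q, q' ∈ Q with p + h(q) = h(q')). Then h is surjective, hence an isomorphism. -/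
/-- An injective, integral homomorphism `h : Q →+ P` of fine, sharp monoids whose
quotient monoid `P/Q` is trivial (every `p ∈ P` satisfies `p + h q = h q'` for some
`q, q' ∈ Q`) is surjective, hence an isomorphism (bijective). -/
theorem surjective_of_trivial_quotient {Q P : Type*} [AddCommMonoid Q] [AddCommMonoid P]
    (hQsharp : Sharp Q) (hQcanc : Cancellative Q) (hQfg : AddMonoid.FG Q)
    (hPsharp : Sharp P) (hPcanc : Cancellative P) (hPfg : AddMonoid.FG P)
    (h : Q →+ P) (hinj : Function.Injective h) (hint : IntegralHom h)
    (htriv : ∀ p : P, ∃ q q' : Q, p + h q = h q') :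
    Function.Surjective h ∧ Function.Bijective h := by
  have hsurj : Function.Surjective h := by
    intro p
    obtain ⟨q, q', e⟩ := htriv p
    have e' : p + h q = 0 + h q' := by rw [zero_add]; exact e
    obtain ⟨q3, q4, p0, hp1, hp2, _⟩ := hint q q' p 0 e'
    have hp0 : p0 = 0 := hPsharp _ _ hp2.symm
    exact ⟨q4, by rw [hp1, hp0, zero_add]⟩
  exact ⟨hsurj, hinj, hsurj⟩
end

section
/- Let P be a fine, sharp additive commutative monoid. Then the strict divisibility relation on P, defined by p < p' if and only if there exists c ∈ P with c ≠ 0 and p + c = p', is well-founded: there is no infinite strictly decreasing sequence p0 > p1 > p2 > ⋯ in P. -/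
section

variable {P : Type*} [AddCommMonoid P]

lemma Sharp.subsingleton_addUnits (hP : Sharp P) : Subsingleton (AddUnits P) :=
  Subsingleton.addUnits_of_isAddUnit fun a ⟨u, hu⟩ ↦ hP a _ (hu ▸ u.add_neg)

lemma Sharp.eq_zero_of_linearCombination_eq_zero (hP : Sharp P) {ι : Type*} [Fintype ι]
    {v : ι → P} (hv : ∀ i, v i ≠ 0) {f : ι → ℕ} (hf : Fintype.linearCombination ℕ v f = 0) :
    f = 0 := by
  have := hP.subsingleton_addUnits
  funext i
  have hi : f i • v i = 0 := by
    rw [Fintype.linearCombination_apply, Finset.sum_eq_zero_iff] at hf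
    exact hf i (Finset.mem_univ i)
  by_contra hfi
  exact hv i (IsAddUnit.of_nsmul_eq_zero hi hfi).eq_zero

lemma AddMonoid.FG.exists_surjective_linearCombination (hP : AddMonoid.FG P) :
    ∃ s : Finset P, 0 ∉ s ∧
      Function.Surjective (Fintype.linearCombination ℕ ((↑) : s → P)) := by
  classical
  obtain ⟨s, hs⟩ := hP.fg_top
  refine ⟨s.erase 0, Finset.notMem_erase 0 s, ?_⟩
  rw [← span_range_eq_top_iff_surjective_fintypeLinearCombination, Subtype.range_coe,
    ← Submodule.toAddSubmonoid_inj, Submodule.span_nat_eq_addSubmonoidClosure,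
    Finset.coe_erase, AddSubmonoid.closure_sdiff_singleton_zero, hs]
  rfl

lemma Cancellative.finite_preimage_singleton {M F : Type*} [AddCommMonoid M] [PartialOrder M]
    [CanonicallyOrderedAdd M] [WellQuasiOrderedLE M] [FunLike F M P] [AddMonoidHomClass F M P]
    (hP : Cancellative P) (φ : F) (hφ : ∀ m, φ m = 0 → m = 0) (p : P) :
    (φ ⁻¹' {p}).Finite := by
  refine WellQuasiOrderedLE.finite_of_isAntichain fun m hm n hn hmn hle ↦ hmn ?_
  obtain ⟨d, rfl⟩ := exists_add_of_le hle
  have hd : φ d = 0 := hP _ _ (φ m) <| by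
    rw [zero_add, add_comm, ← map_add, hn, hm]
  rw [hφ d hd, add_zero]

noncomputable def liftHeight {ι F : Type*} [Fintype ι] [FunLike F (ι → ℕ) P] (φ : F) (p : P) :
    ℕ :=
  sSup ((fun f ↦ ∑ i, f i) '' (φ ⁻¹' {p}))

lemma liftHeight_lt_liftHeight_add {ι F : Type*} [Fintype ι] [FunLike F (ι → ℕ) P]
    [AddMonoidHomClass F (ι → ℕ) P] {φ : F} (hsurj : Function.Surjective φ)
    (hfin : ∀ p, (φ ⁻¹' {p}).Finite) {p c : P} (hc : c ≠ 0) :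
    liftHeight φ p < liftHeight φ (p + c) := by
  obtain ⟨f, hf, hfp⟩ : liftHeight φ p ∈ (fun f ↦ ∑ i, f i) '' (φ ⁻¹' {p}) :=
    Nat.sSup_mem ((show (φ ⁻¹' {p}).Nonempty from hsurj p).image _) ((hfin p).image _).bddAbove
  obtain ⟨g, rfl⟩ := hsurj c
  have hg : 0 < ∑ i, g i := by
    refine Nat.pos_of_ne_zero fun h ↦ hc ?_
    rw [Finset.sum_eq_zero_iff] at h
    rw [show g = 0 from funext fun i ↦ h i (Finset.mem_univ i), map_zero]
  calc liftHeight φ p = ∑ i, f i := hfp.symm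
    _ < ∑ i, f i + ∑ i, g i := Nat.lt_add_of_pos_right hg
    _ = ∑ i, (f + g) i := Finset.sum_add_distrib.symm
    _ ≤ liftHeight φ (p + φ g) :=
        le_csSup ((hfin _).image _).bddAbove ⟨f + g, (map_add φ f g).trans (congrArg (· + φ g) hf), rfl⟩

end

/-- In a fine (cancellative and finitely generated), sharp monoid `P`, the strict
divisibility relation `p < p' ↔ ∃ c ≠ 0, p + c = p'` is well-founded: there is no
infinite strictly decreasing sequence. -/
theorem strict_divisibility_wellFounded (P : Type*) [AddCommMonoid P]
    (hPsharp : Sharp P) (hPcanc : Cancellative P) (hPfg : AddMonoid.FG P) :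
    WellFounded (fun p p' : P => ∃ c : P, c ≠ 0 ∧ p + c = p') := by
  obtain ⟨s, hs0, hsurj⟩ := hPfg.exists_surjective_linearCombination
  set φ := Fintype.linearCombination ℕ ((↑) : s → P)
  have hker : ∀ f, φ f = 0 → f = 0 := fun f ↦
    hPsharp.eq_zero_of_linearCombination_eq_zero (fun i hi ↦ hs0 (hi ▸ i.2))
  have hfin : ∀ p, (φ ⁻¹' {p}).Finite := hPcanc.finite_preimage_singleton φ hker
  refine Subrelation.wf ?_ (InvImage.wf (liftHeight φ) wellFounded_lt)
  rintro p _ ⟨c, hc, rfl⟩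
  exact liftHeight_lt_liftHeight_add hsurj hfin hc
end
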